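/- Let A be a normed division algebra. Then for all a, b ∈ A one has ⟨a, b⟩ = ⟨a * conj(b), 1⟩, and moreover a * conj(a) = ‖a‖² • 1 and conj(a) * a = ‖a‖² • 1. -/

import Mathlib

open scoped RealInnerProductSpace

/-- A normed division algebra: a real inner product space with an `ℝ`-bilinear
multiplication (not necessarily associative or commutative), a two-sided
multiplicative identity `one ≠ 0`, satisfying `‖a*b‖ = ‖a‖ * ‖b‖`. -/
structure NormedDivisionAlgebra (A : Type*) [NormedAddCommGroup A] [InnerProductSpace ℝ A] where
  mul : A →ₗ[ℝ] A →ₗ[ℝ] A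
  one : A
  one_ne_zero : one ≠ 0
  one_mul : ∀ a : A, mul one a = a
  mul_one : ∀ a : A, mul a one = a
  norm_mul : ∀ a b : A, ‖mul a b‖ = ‖a‖ * ‖b‖

namespace NormedDivisionAlgebra

variable {A : Type*} [NormedAddCommGroup A] [InnerProductSpace ℝ A]

/-- `Re a`: the orthogonal projection of `a` onto the real part `Re A = ℝ · 1`. -/
noncomputable def re (D : NormedDivisionAlgebra A) (a : A) : A :=
  (⟪a, D.one⟫ / ‖D.one‖ ^ 2) • D.one

/-- `Im a`: the orthogonal projection of `a` onto the imaginary part `Im A = (ℝ · 1)ᗮ`. -/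
noncomputable def im (D : NormedDivisionAlgebra A) (a : A) : A := a - D.re a

/-- The conjugate `conj a = Re a - Im a`. -/
noncomputable def conj (D : NormedDivisionAlgebra A) (a : A) : A := D.re a - D.im a

/-- The real part `Re A = ℝ · 1` as a submodule. -/
def ReSub (D : NormedDivisionAlgebra A) : Submodule ℝ A := Submodule.span ℝ {D.one}

/-- The imaginary part `Im A = (ℝ · 1)ᗮ` as a submodule. -/
noncomputable def ImSub (D : NormedDivisionAlgebra A) : Submodule ℝ A := (Submodule.span ℝ {D.one})ᗮ

/-- The commutator `[a, b] = a*b - b*a`. -/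
def comm (D : NormedDivisionAlgebra A) (a b : A) : A := D.mul a b - D.mul b a

/-- The associator `[a, b, c] = (a*b)*c - a*(b*c)`. -/
def assoc (D : NormedDivisionAlgebra A) (a b c : A) : A :=
  D.mul (D.mul a b) c - D.mul a (D.mul b c)

/-- The cross product `a × b = Im (a*b)` (intended for `a, b ∈ Im A`). -/
noncomputable def cross (D : NormedDivisionAlgebra A) (a b : A) : A := D.im (D.mul a b)

end NormedDivisionAlgebra

/-!
Polarizing the composition law `‖a * c‖ = ‖a‖ ‖c‖` in the left factor gives
`⟪a * c, b * c⟫ = ⟪a, b⟫ ‖c‖²`, and polarizing that once more in `c` gives the exchange identity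
`⟪a * b, c * d⟫ + ⟪a * d, c * b⟫ = 2 ⟪a, c⟫ ⟪b, d⟫`. Since `‖1‖ = 1`, the conjugate is the affine
expression `conj b = 2 ⟪b, 1⟫ • 1 - b`, so every claim becomes linear in the products and
follows from these two identities with one of the factors equal to `1`.
-/

namespace NormedDivisionAlgebra

variable {A : Type*} [NormedAddCommGroup A] [InnerProductSpace ℝ A] (D : NormedDivisionAlgebra A)

lemma norm_one : ‖D.one‖ = 1 := by
  have h : ‖D.one‖ * ‖D.one‖ = ‖D.one‖ := by rw [← D.norm_mul, D.mul_one]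
  exact (mul_eq_right₀ (norm_ne_zero_iff.mpr D.one_ne_zero)).mp h

lemma inner_mul_mul_right (a b c : A) :
    ⟪D.mul a c, D.mul b c⟫ = ⟪a, b⟫ * ‖c‖ ^ 2 := by
  have h : ‖D.mul (a + b) c‖ ^ 2 = ‖a + b‖ ^ 2 * ‖c‖ ^ 2 := by rw [D.norm_mul]; ring
  rw [map_add, LinearMap.add_apply, norm_add_sq_real, D.norm_mul a c, D.norm_mul b c,
    norm_add_sq_real a b] at h
  linear_combination h / 2

lemma inner_mul_mul_add_inner_mul_mul (a b c d : A) :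
    ⟪D.mul a b, D.mul c d⟫ + ⟪D.mul a d, D.mul c b⟫ = 2 * ⟪a, c⟫ * ⟪b, d⟫ := by
  have h := D.inner_mul_mul_right a c (b + d)
  rw [map_add, map_add, norm_add_sq_real] at h
  simp only [inner_add_left, inner_add_right] at h
  linear_combination h - D.inner_mul_mul_right a c b - D.inner_mul_mul_right a c d

lemma conj_eq_smul_one_sub (b : A) : D.conj b = (2 * ⟪b, D.one⟫) • D.one - b := by
  rw [conj, im, re, D.norm_one]
  module

lemma mul_conj (a b : A) : D.mul a (D.conj b) = (2 * ⟪b, D.one⟫) • a - D.mul a b := by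
  rw [D.conj_eq_smul_one_sub, map_sub, map_smul, D.mul_one]

lemma conj_mul (a b : A) : D.mul (D.conj b) a = (2 * ⟪b, D.one⟫) • a - D.mul b a := by
  rw [D.conj_eq_smul_one_sub, map_sub, LinearMap.sub_apply, map_smul, LinearMap.smul_apply,
    D.one_mul]

lemma inner_mul_conj_one (a b : A) : ⟪D.mul a (D.conj b), D.one⟫ = ⟪a, b⟫ := by
  have h := D.inner_mul_mul_add_inner_mul_mul a b D.one D.one
  rw [D.mul_one, D.mul_one, D.one_mul] at h
  rw [D.mul_conj, inner_sub_left, real_inner_smul_left]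
  linear_combination -h

lemma mul_conj_self (a : A) : D.mul a (D.conj a) = (‖a‖ ^ 2) • D.one := by
  refine ext_inner_right ℝ fun c => ?_
  have h := D.inner_mul_mul_add_inner_mul_mul a a c D.one
  rw [D.mul_one, D.mul_one] at h
  have h1 := D.inner_mul_mul_right D.one c a
  rw [D.one_mul] at h1
  rw [D.mul_conj, inner_sub_left, real_inner_smul_left, real_inner_smul_left]
  linear_combination h1 - h

lemma conj_mul_self (a : A) : D.mul (D.conj a) a = (‖a‖ ^ 2) • D.one := by
  rw [D.conj_mul, ← D.mul_conj_self, D.mul_conj]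

end NormedDivisionAlgebra

theorem nda_inner_eq_re_mul_conj {A : Type*} [NormedAddCommGroup A] [InnerProductSpace ℝ A]
    (D : NormedDivisionAlgebra A) (a b : A) :
    ⟪a, b⟫ = ⟪D.mul a (D.conj b), D.one⟫ ∧
      D.mul a (D.conj a) = (‖a‖ ^ 2) • D.one ∧
      D.mul (D.conj a) a = (‖a‖ ^ 2) • D.one :=
  ⟨(D.inner_mul_conj_one a b).symm, D.mul_conj_self a, D.conj_mul_self a⟩
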